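/- arXiv:2404.03218 — 5 statements merged into one kernel-verified Lean document; each statement's English description precedes it below -/
import Mathlib

section
/- Let R be proper, lower semicontinuous, strongly convex with modulus σ on a Hilbert space X. For ξ, ξ' ∈ X set x = ∇R*(ξ) (so ξ ∈ ∂R(x)) and let x̂ ∈ dom(R). Then D_R^{ξ'}(x̂, ∇R*(ξ')) - D_R^{ξ}(x̂, x) ≤ (1/(4σ)) ‖ξ' - ξ‖² + ⟨ξ' - ξ, x - x̂⟩, where D_R^{η}(z, w) := R(z) - R(w) - ⟨η, z - w⟩. -/
/-!
The Fenchel–Young gap `R x + R*(ξ) - ⟪ξ, x⟫` is nonnegative, and σ-strong convexity of `R` bounds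
`σ/4 ‖x - y‖²` by the average of the gaps at `x` and `y`. Hence near-maximizers of `⟪ξ, ·⟫ - R`
form a Cauchy sequence, whose limit `x_ξ` attains `R*(ξ)` by lower semicontinuity; letting the
convex combination collapse onto `x_ξ` shows that the gap at `x` is at least `σ‖x - x_ξ‖²`.
With Young's inequality `⟪ξ' - ξ, x - x_ξ⟫ ≤ ‖ξ' - ξ‖²/(4σ) + σ‖x - x_ξ‖²` this squeezes
`R*(ξ') - R*(ξ) - ⟪ξ' - ξ, x_ξ⟫` between `0` and `‖ξ' - ξ‖²/(4σ)`, so `∇R*(ξ) = x_ξ`.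
Both Bregman distances are Fenchel–Young gaps, so their difference is
`R*(ξ') - R*(ξ) - ⟪ξ' - ξ, x̂⟫`, and the upper half of the squeeze is the claim.
-/

open scoped RealInnerProductSpace
open Filter Topology

section

variable {X : Type*} [NormedAddCommGroup X] [InnerProductSpace ℝ X]

lemma real_inner_le_sq_div_add_mul_sq {σ : ℝ} (hσ : 0 < σ) (a b : X) :
    ⟪a, b⟫ ≤ 1 / (4 * σ) * ‖a‖ ^ 2 + σ * ‖b‖ ^ 2 := by
  rw [one_div_mul_eq_div, div_add' _ _ _ (by positivity), le_div_iff₀ (by positivity)]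
  nlinarith [real_inner_le_norm a b, sq_nonneg (‖a‖ - 2 * σ * ‖b‖)]

lemma hasGradientAt_of_abs_sub_le_mul_sq [CompleteSpace X] {f : X → ℝ} {x g : X} {C : ℝ}
    (h : ∀ y, |f y - f x - ⟪y - x, g⟫| ≤ C * ‖y - x‖ ^ 2) : HasGradientAt f g x := by
  rw [hasGradientAt_iff_hasFDerivAt, hasFDerivAt_iff_isLittleO_nhds_zero]
  refine Asymptotics.IsBigO.trans_isLittleO ?_ (Asymptotics.isLittleO_norm_pow_id one_lt_two)
  refine Asymptotics.IsBigO.of_bound C (Eventually.of_forall fun v => ?_)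
  simpa [real_inner_comm g] using h (x + v)

lemma LowerSemicontinuousAt.le_of_tendsto {α β γ : Type*} [TopologicalSpace α]
    [LinearOrder γ] [DenselyOrdered γ] [TopologicalSpace γ] [OrderTopology γ]
    {f : α → γ} {x : α} (hf : LowerSemicontinuousAt f x) {l : Filter β} [l.NeBot] {u : β → α}
    (hu : Tendsto u l (𝓝 x)) {v : β → γ} {a : γ} (hv : Tendsto v l (𝓝 a))
    (hfv : ∀ b, f (u b) ≤ v b) : f x ≤ a :=
  le_of_forall_lt_imp_le_of_dense fun c hc =>
    ge_of_tendsto hv ((hu.eventually (hf c hc)).mono fun b hb => (hb.trans_le (hfv b)).le)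

section StrongConvexity

variable {s : Set X} {f : X → ℝ} {m c : ℝ} {ξ : X}

lemma StrongConvexOn.mul_sq_norm_sub_le (hf : StrongConvexOn s m f)
    (hc : ∀ z ∈ s, ⟪ξ, z⟫ - f z ≤ c) {x y : X} (hx : x ∈ s) (hy : y ∈ s) {a b : ℝ}
    (ha : 0 ≤ a) (hb : 0 ≤ b) (hab : a + b = 1) :
    a * b * (m / 2 * ‖x - y‖ ^ 2) ≤ a * (f x + c - ⟪ξ, x⟫) + b * (f y + c - ⟪ξ, y⟫) := by
  have hconv := hf.2 hx hy ha hb hab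
  have hmid := hc _ (hf.1 hx hy ha hb hab)
  rw [inner_add_right, inner_smul_right, inner_smul_right] at hmid
  simp only [smul_eq_mul] at hconv
  linear_combination hconv + hmid - c * hab

lemma StrongConvexOn.sq_norm_sub_le (hf : StrongConvexOn s m f)
    (hc : ∀ z ∈ s, ⟪ξ, z⟫ - f z ≤ c) {x y : X} (hx : x ∈ s) (hy : y ∈ s)
    (hy_gap : f y + c - ⟪ξ, y⟫ ≤ 0) :
    m / 2 * ‖x - y‖ ^ 2 ≤ f x + c - ⟪ξ, x⟫ := by
  have hK : ∀ t ∈ Set.Ioo (0 : ℝ) 1, (1 - t) * (m / 2 * ‖x - y‖ ^ 2) ≤ f x + c - ⟪ξ, x⟫ := by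
    rintro t ⟨ht0, ht1⟩
    have hineq := hf.mul_sq_norm_sub_le hc hx hy ht0.le (sub_nonneg.2 ht1.le) (add_sub_cancel t 1)
    have hy_term := mul_nonpos_of_nonneg_of_nonpos (sub_nonneg.2 ht1.le) hy_gap
    refine le_of_mul_le_mul_left ?_ ht0
    linarith
  have hlim : Tendsto (fun t : ℝ => (1 - t) * (m / 2 * ‖x - y‖ ^ 2)) (𝓝[>] 0)
      (𝓝 (m / 2 * ‖x - y‖ ^ 2)) := by
    have : Continuous fun t : ℝ => (1 - t) * (m / 2 * ‖x - y‖ ^ 2) := by fun_prop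
    simpa using (this.tendsto 0).mono_left nhdsWithin_le_nhds
  exact le_of_tendsto hlim (eventually_of_mem (Ioo_mem_nhdsGT one_pos) hK)

lemma StrongConvexOn.cauchySeq_of_gap_lt (hf : StrongConvexOn s m f) (hm : 0 < m)
    (hc : ∀ z ∈ s, ⟪ξ, z⟫ - f z ≤ c) {u : ℕ → X} (hu : ∀ n, u n ∈ s)
    (hgap : ∀ n, f (u n) + c - ⟪ξ, u n⟫ < 1 / (n + 1)) : CauchySeq u := by
  refine cauchySeq_of_le_tendsto_0 (fun N => √(8 / m * (1 / (N + 1)))) (fun n k N hn hk => ?_) ?_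
  · have hmid := hf.mul_sq_norm_sub_le hc (hu n) (hu k) (by norm_num : (0 : ℝ) ≤ 1 / 2)
      (by norm_num : (0 : ℝ) ≤ 1 / 2) (by norm_num)
    have hgap_N : ∀ j, N ≤ j → f (u j) + c - ⟪ξ, u j⟫ < 1 / (N + 1) := fun j hj =>
      (hgap j).trans_le (Nat.one_div_le_one_div hj)
    rw [dist_eq_norm, Real.le_sqrt (norm_nonneg _) (by positivity), div_mul_eq_mul_div,
      le_div_iff₀ hm]
    nlinarith [hgap_N n hn, hgap_N k hk]
  · simpa using (tendsto_one_div_add_atTop_nhds_zero_nat.const_mul (8 / m)).sqrt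

end StrongConvexity

def IsFenchelConjugate (R : X → EReal) (Rstar : X → ℝ) : Prop :=
  ∀ ξ, ((Rstar ξ : ℝ) : EReal) = ⨆ x, ((⟪ξ, x⟫ : ℝ) : EReal) - R x

variable {R : X → EReal} {σ : ℝ} {Rstar : X → ℝ}

lemma strongConvexOn_toReal (hbot : ∀ x, R x ≠ ⊥)
    (hsc : ∀ x' x : X, R x' ≠ ⊤ → R x ≠ ⊤ → ∀ t : ℝ, 0 ≤ t → t ≤ 1 →
      R (t • x' + (1 - t) • x) + ((σ * t * (1 - t) * ‖x' - x‖ ^ 2 : ℝ) : EReal)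
        ≤ ((t : ℝ) : EReal) * R x' + (((1 - t : ℝ)) : EReal) * R x) :
    StrongConvexOn {x | R x ≠ ⊤} (2 * σ) fun x => (R x).toReal := by
  have key : ∀ ⦃x⦄, R x ≠ ⊤ → ∀ ⦃y⦄, R y ≠ ⊤ → ∀ ⦃a b : ℝ⦄, 0 ≤ a → 0 ≤ b → a + b = 1 →
      R (a • x + b • y) ≤
        (((a * (R x).toReal + b * (R y).toReal - σ * a * b * ‖x - y‖ ^ 2 : ℝ)) : EReal) := by
    intro x hx y hy a b ha hb hab
    obtain rfl : b = 1 - a := by linarith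
    have h := hsc x y hx hy a ha (by linarith)
    rw [← EReal.coe_toReal hx (hbot x), ← EReal.coe_toReal hy (hbot y), ← EReal.coe_mul,
      ← EReal.coe_mul, ← EReal.coe_add] at h
    rw [EReal.coe_sub, EReal.le_sub_iff_add_le (.inl (EReal.coe_ne_bot _))
      (.inl (EReal.coe_ne_top _))]
    exact h
  refine ⟨fun x hx y hy a b ha hb hab => ne_top_of_le_ne_top (EReal.coe_ne_top _)
    (key hx hy ha hb hab), fun x hx y hy a b ha hb hab => ?_⟩
  have h := key hx hy ha hb hab
  rw [← EReal.coe_toReal (ne_top_of_le_ne_top (EReal.coe_ne_top _) h) (hbot _),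
    EReal.coe_le_coe_iff] at h
  simp only [smul_eq_mul]
  linarith

lemma bregman_eq_add_conj_sub_inner {ξ w z : X} {r : ℝ}
    (hw : R w = ((⟪ξ, w⟫ - Rstar ξ : ℝ) : EReal)) (hz : R z = r) :
    R z - R w - ((⟪ξ, z - w⟫ : ℝ) : EReal) = ((r + Rstar ξ - ⟪ξ, z⟫ : ℝ) : EReal) := by
  rw [hz, hw, ← EReal.coe_sub, ← EReal.coe_sub, inner_sub_right]
  congr 1
  ring

namespace IsFenchelConjugate

lemma inner_sub_toReal_le (h : IsFenchelConjugate R Rstar) (hbot : ∀ x, R x ≠ ⊥) {x : X}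
    (hx : R x ≠ ⊤) (ξ : X) : ⟪ξ, x⟫ - (R x).toReal ≤ Rstar ξ := by
  have := (le_iSup (fun x => ((⟪ξ, x⟫ : ℝ) : EReal) - R x) x).trans_eq (h ξ).symm
  rwa [← EReal.coe_toReal hx (hbot x), ← EReal.coe_sub, EReal.coe_le_coe_iff] at this

lemma exists_gap_lt (h : IsFenchelConjugate R Rstar) (hbot : ∀ x, R x ≠ ⊥) (ξ : X) {ε : ℝ}
    (hε : 0 < ε) : ∃ x, R x ≠ ⊤ ∧ (R x).toReal + Rstar ξ - ⟪ξ, x⟫ < ε := by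
  have : ((Rstar ξ - ε : ℝ) : EReal) < ⨆ x, ((⟪ξ, x⟫ : ℝ) : EReal) - R x := by
    rw [← h ξ, EReal.coe_lt_coe_iff]
    linarith
  obtain ⟨x, hx⟩ := lt_iSup_iff.1 this
  have hx_top : R x ≠ ⊤ := by
    rintro hx'
    simp [hx'] at hx
  refine ⟨x, hx_top, ?_⟩
  rw [← EReal.coe_toReal hx_top (hbot x), ← EReal.coe_sub, EReal.coe_lt_coe_iff] at hx
  linarith

lemma exists_eq_inner_sub [CompleteSpace X] (h : IsFenchelConjugate R Rstar) (hσ : 0 < σ)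
    (hbot : ∀ x, R x ≠ ⊥) (hlsc : LowerSemicontinuous R)
    (hf : StrongConvexOn {x | R x ≠ ⊤} (2 * σ) fun x => (R x).toReal) (ξ : X) :
    ∃ x, R x = ((⟪ξ, x⟫ - Rstar ξ : ℝ) : EReal) := by
  choose u hu hgap using fun n : ℕ => h.exists_gap_lt hbot ξ (Nat.one_div_pos_of_nat (n := n))
  obtain ⟨x, hx⟩ := cauchySeq_tendsto_of_complete
    (hf.cauchySeq_of_gap_lt (by positivity) (fun z hz => h.inner_sub_toReal_le hbot hz ξ) hu hgap)
  have hle : R x ≤ ((⟪ξ, x⟫ - Rstar ξ : ℝ) : EReal) := by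
    refine (hlsc.lowerSemicontinuousAt x).le_of_tendsto hx
      (v := fun n : ℕ => ((⟪ξ, u n⟫ - Rstar ξ + 1 / (n + 1) : ℝ) : EReal)) ?_ fun n => ?_
    · have hv : Tendsto (fun n : ℕ => ⟪ξ, u n⟫ - Rstar ξ + 1 / (n + 1)) atTop
          (𝓝 (⟪ξ, x⟫ - Rstar ξ)) := by
        simpa using ((tendsto_const_nhds.inner hx).sub_const (Rstar ξ)).add
          tendsto_one_div_add_atTop_nhds_zero_nat
      exact (continuous_coe_real_ereal.tendsto _).comp hv
    · rw [← EReal.coe_toReal (hu n) (hbot _), EReal.coe_le_coe_iff]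
      linarith [hgap n]
  have hx_top : R x ≠ ⊤ := ne_top_of_le_ne_top (EReal.coe_ne_top _) hle
  refine ⟨x, le_antisymm hle ?_⟩
  rw [← EReal.coe_toReal hx_top (hbot x), EReal.coe_le_coe_iff]
  linarith [h.inner_sub_toReal_le hbot hx_top ξ]

variable {ξ xb : X}

lemma add_inner_sub_le (h : IsFenchelConjugate R Rstar) (hbot : ∀ x, R x ≠ ⊥)
    (hxb : R xb = ((⟪ξ, xb⟫ - Rstar ξ : ℝ) : EReal)) (ξ' : X) :
    Rstar ξ + ⟪ξ' - ξ, xb⟫ ≤ Rstar ξ' := by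
  have := h.inner_sub_toReal_le hbot (hxb ▸ EReal.coe_ne_top _) ξ'
  rw [hxb, EReal.toReal_coe] at this
  rw [inner_sub_left]
  linarith

lemma le_add_inner_sub_add_sq (h : IsFenchelConjugate R Rstar) (hσ : 0 < σ)
    (hbot : ∀ x, R x ≠ ⊥) (hf : StrongConvexOn {x | R x ≠ ⊤} (2 * σ) fun x => (R x).toReal)
    (hxb : R xb = ((⟪ξ, xb⟫ - Rstar ξ : ℝ) : EReal)) (ξ' : X) :
    Rstar ξ' ≤ Rstar ξ + ⟪ξ' - ξ, xb⟫ + 1 / (4 * σ) * ‖ξ' - ξ‖ ^ 2 := by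
  have hxb_top : R xb ≠ ⊤ := hxb ▸ EReal.coe_ne_top _
  rw [← EReal.coe_le_coe_iff, h ξ']
  refine iSup_le fun x => ?_
  by_cases hx : R x = ⊤
  · simp [hx]
  have hgrowth := hf.sq_norm_sub_le (fun z hz => h.inner_sub_toReal_le hbot hz ξ) hx hxb_top
    (by simp only [hxb, EReal.toReal_coe]; linarith)
  have hyoung := real_inner_le_sq_div_add_mul_sq hσ (ξ' - ξ) (x - xb)
  rw [← EReal.coe_toReal hx (hbot x), ← EReal.coe_sub, EReal.coe_le_coe_iff]
  simp only [inner_sub_left, inner_sub_right] at hgrowth hyoung ⊢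
  linarith

lemma hasGradientAt [CompleteSpace X] (h : IsFenchelConjugate R Rstar) (hσ : 0 < σ)
    (hbot : ∀ x, R x ≠ ⊥) (hf : StrongConvexOn {x | R x ≠ ⊤} (2 * σ) fun x => (R x).toReal)
    (hxb : R xb = ((⟪ξ, xb⟫ - Rstar ξ : ℝ) : EReal)) : HasGradientAt Rstar xb ξ := by
  refine hasGradientAt_of_abs_sub_le_mul_sq (C := 1 / (4 * σ)) fun ξ' => ?_
  have hlo := h.add_inner_sub_le hbot hxb ξ'
  have hhi := h.le_add_inner_sub_add_sq hσ hbot hf hxb ξ'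
  have hsq : 0 ≤ 1 / (4 * σ) * ‖ξ' - ξ‖ ^ 2 := by positivity
  rw [abs_le]
  constructor <;> linarith

end IsFenchelConjugate

end

theorem bregman_one_step_estimate_general
    {X : Type*} [NormedAddCommGroup X] [InnerProductSpace ℝ X] [CompleteSpace X]
    (R : X → EReal) (σ : ℝ) (hσ : 0 < σ)
    (hproper_bot : ∀ x, R x ≠ ⊥)
    (hlsc : LowerSemicontinuous R)
    (hsc : ∀ x' x : X, R x' ≠ ⊤ → R x ≠ ⊤ → ∀ t : ℝ, 0 ≤ t → t ≤ 1 →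
      R (t • x' + (1 - t) • x) + ((σ * t * (1 - t) * ‖x' - x‖ ^ 2 : ℝ) : EReal)
        ≤ ((t : ℝ) : EReal) * R x' + (((1 - t : ℝ)) : EReal) * R x)
    (Rstar : X → ℝ)
    (hconj : ∀ ξ : X, ((Rstar ξ : ℝ) : EReal) = ⨆ x : X, (((inner ℝ ξ x : ℝ)) : EReal) - R x)
    (ξ ξ' xh : X) (hxh : R xh ≠ ⊤) :
    (R xh - R (gradient Rstar ξ') - ((inner ℝ ξ' (xh - gradient Rstar ξ') : ℝ) : EReal))
      - (R xh - R (gradient Rstar ξ) - ((inner ℝ ξ (xh - gradient Rstar ξ) : ℝ) : EReal))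
    ≤ ((1 / (4 * σ) * ‖ξ' - ξ‖ ^ 2
        + inner ℝ (ξ' - ξ) (gradient Rstar ξ - xh) : ℝ) : EReal) := by
  have hRstar : IsFenchelConjugate R Rstar := hconj
  have hf := strongConvexOn_toReal hproper_bot hsc
  obtain ⟨x, hx⟩ := hRstar.exists_eq_inner_sub hσ hproper_bot hlsc hf ξ
  obtain ⟨x', hx'⟩ := hRstar.exists_eq_inner_sub hσ hproper_bot hlsc hf ξ'
  have hxh_real := (EReal.coe_toReal hxh (hproper_bot xh)).symm
  rw [(hRstar.hasGradientAt hσ hproper_bot hf hx).gradient,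
    (hRstar.hasGradientAt hσ hproper_bot hf hx').gradient,
    bregman_eq_add_conj_sub_inner hx hxh_real, bregman_eq_add_conj_sub_inner hx' hxh_real,
    ← EReal.coe_sub, EReal.coe_le_coe_iff]
  have hupper := hRstar.le_add_inner_sub_add_sq hσ hproper_bot hf hx ξ'
  simp only [inner_sub_left, inner_sub_right] at hupper ⊢
  linarith

/-- one-step Bregman distance estimate. With `x = ∇R*(ξ)` one has
`D_R^{ξ'}(x̂, ∇R*(ξ')) - D_R^{ξ}(x̂, x) ≤ ‖ξ' - ξ‖²/(4σ) + ⟨ξ' - ξ, x - x̂⟩`. -/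
theorem bregman_one_step_estimate
    {X : Type*} [NormedAddCommGroup X] [InnerProductSpace ℝ X] [CompleteSpace X]
    (R : X → EReal) (σ : ℝ) (hσ : 0 < σ)
    (hproper_bot : ∀ x, R x ≠ ⊥) (hproper_top : ∃ x, R x ≠ ⊤)
    (hlsc : LowerSemicontinuous R)
    (hsc : ∀ x' x : X, R x' ≠ ⊤ → R x ≠ ⊤ → ∀ t : ℝ, 0 ≤ t → t ≤ 1 →
      R (t • x' + (1 - t) • x) + ((σ * t * (1 - t) * ‖x' - x‖ ^ 2 : ℝ) : EReal)
        ≤ ((t : ℝ) : EReal) * R x' + (((1 - t : ℝ)) : EReal) * R x)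
    (Rstar : X → ℝ)
    (hconj : ∀ ξ : X, ((Rstar ξ : ℝ) : EReal) = ⨆ x : X, (((inner ℝ ξ x : ℝ)) : EReal) - R x)
    (ξ ξ' xh : X) (hxh : R xh ≠ ⊤) :
    (R xh - R (gradient Rstar ξ') - ((inner ℝ ξ' (xh - gradient Rstar ξ') : ℝ) : EReal))
      - (R xh - R (gradient Rstar ξ) - ((inner ℝ ξ (xh - gradient Rstar ξ) : ℝ) : EReal))
    ≤ ((1 / (4 * σ) * ‖ξ' - ξ‖ ^ 2
        + inner ℝ (ξ' - ξ) (gradient Rstar ξ - xh) : ℝ) : EReal) :=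
  bregman_one_step_estimate_general R σ hσ hproper_bot hlsc hsc Rstar hconj ξ ξ' xh hxh
end

section
/- Let F satisfy the tangential cone condition with constant η ∈ [0,1) on a ball B containing x^† and let x^† be a solution of F(x) = y. If w ∈ Ker(L(x^†)) and x^† + t w ∈ B for all sufficiently small |t|, then F(x^† + t w) = y for all sufficiently small |t|. -/
/-! Along a kernel direction of `L x†` the linearisation is constant, so the tangential cone
condition bounds the residual `F (x† + t w) - y` by `η` times itself; as `η < 1`, it vanishes. -/

theorem eq_zero_of_norm_le_mul_norm {E : Type*} [NormedAddCommGroup E] {η : ℝ} (hη : η < 1)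
    {v : E} (hv : ‖v‖ ≤ η * ‖v‖) : v = 0 :=
  norm_le_zero_iff.mp (by nlinarith [norm_nonneg v])

theorem eq_of_tangential_cone_of_map_sub_eq_zero {X Y : Type*} [NormedAddCommGroup X]
    [NormedSpace ℝ X] [NormedAddCommGroup Y] [NormedSpace ℝ Y] {F : X → Y} {A : X →L[ℝ] Y}
    {η : ℝ} (hη : η < 1) {x x' : X} (hcone : ‖F x - F x' - A (x - x')‖ ≤ η * ‖F x - F x'‖)
    (hA : A (x - x') = 0) : F x = F x' := by
  rw [hA, sub_zero] at hcone
  exact sub_eq_zero.mp (eq_zero_of_norm_le_mul_norm hη hcone)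

theorem solution_along_kernel_direction_general
    {X Y : Type*} [NormedAddCommGroup X] [InnerProductSpace ℝ X]
    [NormedAddCommGroup Y] [InnerProductSpace ℝ Y]
    (F : X → Y) (L : X → X →L[ℝ] Y) (B : Set X)
    (η : ℝ) (hη1 : η < 1)
    (htc : ∀ x ∈ B, ∀ x' ∈ B, ‖F x - F x' - L x' (x - x')‖ ≤ η * ‖F x - F x'‖)
    (y : Y) (xd : X) (hxd : xd ∈ B) (hsol : F xd = y)
    (w : X) (hw : w ∈ LinearMap.ker (L xd : X →ₗ[ℝ] Y))
    (hball : ∃ ε > 0, ∀ t : ℝ, |t| < ε → xd + t • w ∈ B) :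
    ∃ ε > 0, ∀ t : ℝ, |t| < ε → F (xd + t • w) = y := by
  obtain ⟨ε, hε, hB⟩ := hball
  refine ⟨ε, hε, fun t ht => hsol ▸ eq_of_tangential_cone_of_map_sub_eq_zero hη1
    (htc _ (hB t ht) _ hxd) ?_⟩
  rw [add_sub_cancel_left, map_smul, show L xd w = 0 from hw, smul_zero]

/-- if `w ∈ Ker(L(x†))` and `x† + t w ∈ B` for all small `|t|`, then
`F(x† + t w) = y` for all small `|t|`. -/
theorem solution_along_kernel_direction
    {X Y : Type*} [NormedAddCommGroup X] [InnerProductSpace ℝ X]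
    [NormedAddCommGroup Y] [InnerProductSpace ℝ Y]
    (F : X → Y) (L : X → X →L[ℝ] Y) (B : Set X)
    (η : ℝ) (hη0 : 0 ≤ η) (hη1 : η < 1)
    (htc : ∀ x ∈ B, ∀ x' ∈ B, ‖F x - F x' - L x' (x - x')‖ ≤ η * ‖F x - F x'‖)
    (y : Y) (xd : X) (hxd : xd ∈ B) (hsol : F xd = y)
    (w : X) (hw : w ∈ LinearMap.ker (L xd : X →ₗ[ℝ] Y))
    (hball : ∃ ε > 0, ∀ t : ℝ, |t| < ε → xd + t • w ∈ B) :
    ∃ ε > 0, ∀ t : ℝ, |t| < ε → F (xd + t • w) = y :=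
  solution_along_kernel_direction_general F L B η hη1 htc y xd hxd hsol w hw hball
end

section
/- Let x^† be the minimum-norm solution relative to x₀ of F(x) = y in the ball B, i.e. ‖x^† - x₀‖ ≤ ‖x - x₀‖ for every solution x in B. Suppose F satisfies the tangential cone condition with η ∈ [0,1) on B and x^† is in the interior of B. Then x^† - x₀ ∈ Ker(L(x^†))^⊥. -/
/-!
Along a direction `w ∈ Ker L(x†)` the tangential cone condition with `η < 1` gives
`F(x† + t w) = F(x†) = y` for small `t`, so `t ↦ ‖x† + t w - x₀‖²` has a local minimum at `0`;
its derivative there, `2 ⟪x† - x₀, w⟫`, must vanish.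
-/

open Filter Topology

theorem apply_eq_of_tangentialCone_of_apply_sub_eq_zero
    {X Y : Type*} [NormedAddCommGroup X] [NormedSpace ℝ X]
    [NormedAddCommGroup Y] [NormedSpace ℝ Y]
    {F : X → Y} {L : X → X →L[ℝ] Y} {B : Set X} {η : ℝ} (hη1 : η < 1)
    (htc : ∀ x ∈ B, ∀ x' ∈ B, ‖F x - F x' - L x' (x - x')‖ ≤ η * ‖F x - F x'‖)
    {x x' : X} (hx : x ∈ B) (hx' : x' ∈ B) (hker : L x' (x - x') = 0) :
    F x = F x' := by
  have h := htc x hx x' hx'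
  rw [hker, sub_zero] at h
  have hnorm : ‖F x - F x'‖ ≤ 0 := by nlinarith [norm_nonneg (F x - F x')]
  exact sub_eq_zero.mp (norm_le_zero_iff.mp hnorm)

theorem inner_eq_zero_of_isLocalMin_norm_add_smul
    {X : Type*} [NormedAddCommGroup X] [InnerProductSpace ℝ X] {a w : X}
    (h : IsLocalMin (fun t : ℝ => ‖a + t • w‖) 0) :
    inner ℝ a w = 0 := by
  have hsq : IsLocalMin (fun t : ℝ => ‖a + t • w‖ ^ 2) 0 :=
    h.mono fun _ hle => pow_le_pow_left₀ (norm_nonneg _) hle 2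
  have hline : HasDerivAt (fun t : ℝ => a + t • w) w 0 := by
    simpa using ((hasDerivAt_id (0 : ℝ)).smul_const w).const_add a
  simpa using hsq.hasDerivAt_eq_zero hline.norm_sq

theorem minimum_norm_solution_orthogonal_general
    {X Y : Type*} [NormedAddCommGroup X] [InnerProductSpace ℝ X]
    [NormedAddCommGroup Y] [InnerProductSpace ℝ Y]
    (F : X → Y) (L : X → X →L[ℝ] Y) (B : Set X)
    (η : ℝ) (hη1 : η < 1)
    (htc : ∀ x ∈ B, ∀ x' ∈ B, ‖F x - F x' - L x' (x - x')‖ ≤ η * ‖F x - F x'‖)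
    (y : Y) (x0 xd : X) (hxd : xd ∈ interior B) (hsol : F xd = y)
    (hmin : ∀ x ∈ B, F x = y → ‖xd - x0‖ ≤ ‖x - x0‖) :
    xd - x0 ∈ (LinearMap.ker (L xd : X →ₗ[ℝ] Y))ᗮ := by
  refine (Submodule.mem_orthogonal' _ _).mpr fun w hw => ?_
  rw [LinearMap.mem_ker, ContinuousLinearMap.coe_coe] at hw
  have hline : Tendsto (fun t : ℝ => xd + t • w) (𝓝 0) (𝓝 xd) :=
    (continuous_const.add (continuous_id.smul continuous_const)).tendsto' 0 xd (by simp)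
  have hB : ∀ᶠ t : ℝ in 𝓝 0, xd + t • w ∈ B := hline (mem_interior_iff_mem_nhds.mp hxd)
  refine inner_eq_zero_of_isLocalMin_norm_add_smul (hB.mono fun t ht => ?_)
  have hsolt : F (xd + t • w) = y := by
    rw [← hsol]
    refine apply_eq_of_tangentialCone_of_apply_sub_eq_zero hη1 htc ht (interior_subset hxd) ?_
    rw [add_sub_cancel_left, map_smul, hw, smul_zero]
  simpa [add_sub_right_comm] using hmin _ ht hsolt

/-- the `x₀`-minimum-norm solution `x†` of `F(x) = y` in `B`, lying in the
interior of `B`, satisfies `x† - x₀ ∈ Ker(L(x†))^⊥` under the tangential cone condition. -/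
theorem minimum_norm_solution_orthogonal
    {X Y : Type*} [NormedAddCommGroup X] [InnerProductSpace ℝ X]
    [NormedAddCommGroup Y] [InnerProductSpace ℝ Y]
    (F : X → Y) (L : X → X →L[ℝ] Y) (B : Set X)
    (η : ℝ) (hη0 : 0 ≤ η) (hη1 : η < 1)
    (htc : ∀ x ∈ B, ∀ x' ∈ B, ‖F x - F x' - L x' (x - x')‖ ≤ η * ‖F x - F x'‖)
    (y : Y) (x0 xd : X) (hxd : xd ∈ interior B) (hsol : F xd = y)
    (hmin : ∀ x ∈ B, F x = y → ‖xd - x0‖ ≤ ‖x - x0‖) :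
    xd - x0 ∈ (LinearMap.ker (L xd : X →ₗ[ℝ] Y))ᗮ :=
  minimum_norm_solution_orthogonal_general F L B η hη1 htc y x0 xd hxd hsol hmin
end

section
/- (Descent inequality for the adaptive heavy ball step) Let R be proper lsc strongly convex with modulus σ, and let x̂ solve F(x) = y. Assume x_n ∈ B with the tangential cone condition (constant η < 1), noisy data ‖y^δ - y‖ ≤ δ. With g_n = L(x_n)*(F(x_n) - y^δ), m_n = ξ_n - ξ_{n-1}, r_n = F(x_n) - y^δ, ξ_{n+1} = ξ_n - α_n g_n + β_n m_n, x_{n+1} = ∇R*(ξ_{n+1}), and Δ_n = D_R^{ξ_n}(x̂, x_n). Then Δ_{n+1} - Δ_n ≤ (1/(4σ)) α_n² ‖g_n‖² - α_n ‖r_n‖² + (1+η) δ α_n ‖r_n‖ + η α_n ‖r_n‖² + β_n ⟨m_n, x_n - x̂⟩ + (1/(4σ)) β_n² ‖m_n‖² - (1/(2σ)) α_n β_n ⟨g_n, m_n⟩. -/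
/-!
Strong convexity upgrades the subgradient inequality at `x_n` to
`R x_{n+1} ≥ R x_n + ⟪ξ_n, x_{n+1} - x_n⟫ + σ ‖x_{n+1} - x_n‖²`, so the change of the Bregman
distance is at most `⟪Δ, x_n - x̂⟫ + ⟪Δ, x_{n+1} - x_n⟫ - σ ‖x_{n+1} - x_n‖²` with
`Δ = ξ_{n+1} - ξ_n = β_n m_n - α_n g_n`; Cauchy–Schwarz and Young bound the last two terms by
`‖Δ‖² / (4σ)`. Finally `⟪g_n, x_n - x̂⟫ = ⟪r_n, L(x_n)(x_n - x̂)⟫`, and the tangential cone condition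
together with the noise bound makes `L(x_n)(x_n - x̂)` equal to `r_n` up to an error of norm at most
`δ + η (‖r_n‖ + δ)`.
-/

open Set Filter Topology
open scoped RealInnerProductSpace

theorem add_le_of_forall_add_one_sub_mul_le {p c q : ℝ}
    (h : ∀ t ∈ Ioo (0 : ℝ) 1, p + (1 - t) * c ≤ q) : p + c ≤ q := by
  have hlim : Tendsto (fun t : ℝ => p + (1 - t) * c) (𝓝[>] 0) (𝓝 (p + c)) := by
    have : Tendsto (fun t : ℝ => p + (1 - t) * c) (𝓝 0) (𝓝 (p + (1 - 0) * c)) :=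
      (by fun_prop : Continuous fun t : ℝ => p + (1 - t) * c).tendsto 0
    simpa using this.mono_left nhdsWithin_le_nhds
  exact le_of_tendsto hlim (eventually_mem_set.mpr (Ioo_mem_nhdsGT one_pos) |>.mono h)

section InnerProductSpace

variable {X : Type*} [NormedAddCommGroup X] [InnerProductSpace ℝ X]

theorem strong_subgradient_inequality {R : X → EReal} {σ a b : ℝ} {x z ξ : X}
    (hx : R x = a) (hz : R z = b)
    (hsc : ∀ t : ℝ, 0 ≤ t → t ≤ 1 →
      R (t • z + (1 - t) • x) + ((σ * t * (1 - t) * ‖z - x‖ ^ 2 : ℝ) : EReal)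
        ≤ (t : EReal) * R z + ((1 - t : ℝ) : EReal) * R x)
    (hsub : ∀ w : X, R x + ((⟪ξ, w - x⟫ : ℝ) : EReal) ≤ R w) :
    a + ⟪ξ, z - x⟫ + σ * ‖z - x‖ ^ 2 ≤ b := by
  have hchord : ∀ t ∈ Ioo (0 : ℝ) 1, ⟪ξ, z - x⟫ + (1 - t) * (σ * ‖z - x‖ ^ 2) ≤ b - a := by
    rintro t ⟨ht0, ht1⟩
    have hlow := hsub (t • z + (1 - t) • x)
    have hup := hsc t ht0.le ht1.le
    rw [show t • z + (1 - t) • x - x = t • (z - x) by module, real_inner_smul_right, hx] at hlow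
    rw [hx, hz] at hup
    have hreal : a + t * ⟪ξ, z - x⟫ + σ * t * (1 - t) * ‖z - x‖ ^ 2 ≤ t * b + (1 - t) * a := by
      exact_mod_cast (add_le_add_left hlow _).trans hup
    refine le_of_mul_le_mul_left ?_ ht0
    linarith
  linarith [add_le_of_forall_add_one_sub_mul_le hchord]

theorem inner_sub_mul_norm_sq_le {σ : ℝ} (hσ : 0 < σ) (u v : X) :
    ⟪u, v⟫ - σ * ‖v‖ ^ 2 ≤ 1 / (4 * σ) * ‖u‖ ^ 2 := by
  have hcs := real_inner_le_norm u v
  rw [div_mul_eq_mul_div, one_mul, le_div_iff₀ (by positivity)]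
  nlinarith [sq_nonneg (‖u‖ - 2 * σ * ‖v‖)]

theorem bregman_step_le {σ a a' ah : ℝ} (hσ : 0 < σ) {x x' xh ξ ξ' : X}
    (hstrong : a + ⟪ξ, x' - x⟫ + σ * ‖x' - x‖ ^ 2 ≤ a') :
    (ah - a' - ⟪ξ', xh - x'⟫) - (ah - a - ⟪ξ, xh - x⟫)
      ≤ ⟪ξ' - ξ, x - xh⟫ + 1 / (4 * σ) * ‖ξ' - ξ‖ ^ 2 := by
  have hsplit : ⟪ξ, xh - x⟫ - ⟪ξ', xh - x'⟫ - ⟪ξ, x' - x⟫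
      = ⟪ξ' - ξ, x - xh⟫ + ⟪ξ' - ξ, x' - x⟫ := by
    simp only [inner_sub_left, inner_sub_right]
    ring
  linarith [inner_sub_mul_norm_sq_le hσ (ξ' - ξ) (x' - x)]

end InnerProductSpace

theorem residual_sq_le_inner_tangential {X Y : Type*}
    [NormedAddCommGroup X] [InnerProductSpace ℝ X] [NormedAddCommGroup Y] [InnerProductSpace ℝ Y]
    {F : X → Y} {T : X →L[ℝ] Y} {x xh : X} {y yδ : Y} {η δ : ℝ} (hη : 0 ≤ η)
    (htc : ‖F xh - F x - T (xh - x)‖ ≤ η * ‖F xh - F x‖) (hxh : F xh = y)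
    (hnoise : ‖yδ - y‖ ≤ δ) :
    (1 - η) * ‖F x - yδ‖ ^ 2 - (1 + η) * δ * ‖F x - yδ‖ ≤ ⟪F x - yδ, T (x - xh)⟫ := by
  subst hxh
  set r := F x - yδ
  set e := yδ - F xh
  set w := F xh - F x - T (xh - x)
  have hT : T (x - xh) = r + e + w := by
    rw [← neg_sub xh x, map_neg]
    simp only [r, e, w]
    abel
  have hgap : ‖F xh - F x‖ ≤ ‖r‖ + δ := by
    rw [show F xh - F x = -(r + e) by simp only [r, e]; abel, norm_neg]
    linarith [norm_add_le r e]
  have hre : -(‖r‖ * δ) ≤ ⟪r, e⟫ :=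
    (neg_le_neg (mul_le_mul_of_nonneg_left hnoise (norm_nonneg r))).trans
      (neg_le_of_abs_le (abs_real_inner_le_norm r e))
  have hrw : -(‖r‖ * (η * (‖r‖ + δ))) ≤ ⟪r, w⟫ :=
    (neg_le_neg (mul_le_mul_of_nonneg_left (htc.trans (by gcongr)) (norm_nonneg r))).trans
      (neg_le_of_abs_le (abs_real_inner_le_norm r w))
  rw [hT, inner_add_right, inner_add_right, real_inner_self_eq_norm_sq]
  linarith

theorem ahb_descent_inequality_general
    {X Y : Type*} [NormedAddCommGroup X] [InnerProductSpace ℝ X] [CompleteSpace X]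
    [NormedAddCommGroup Y] [InnerProductSpace ℝ Y] [CompleteSpace Y]
    (R : X → EReal) (σ : ℝ) (hσ : 0 < σ)
    (hproper_bot : ∀ x, R x ≠ ⊥)
    (hsc : ∀ x' x : X, R x' ≠ ⊤ → R x ≠ ⊤ → ∀ t : ℝ, 0 ≤ t → t ≤ 1 →
      R (t • x' + (1 - t) • x) + ((σ * t * (1 - t) * ‖x' - x‖ ^ 2 : ℝ) : EReal)
        ≤ ((t : ℝ) : EReal) * R x' + (((1 - t : ℝ)) : EReal) * R x)
    (F : X → Y) (L : X → X →L[ℝ] Y) (B : Set X)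
    (η : ℝ) (hη0 : 0 ≤ η)
    (htc : ∀ u ∈ B, ∀ v ∈ B, ‖F u - F v - L v (u - v)‖ ≤ η * ‖F u - F v‖)
    (y yδ : Y) (δ : ℝ) (hnoise : ‖yδ - y‖ ≤ δ)
    (xh : X) (hxhB : xh ∈ B) (hxhsol : F xh = y) (hxhdom : R xh ≠ ⊤)
    (xn xnext ξn ξnext mn gn : X) (rn : Y)
    (αn βn : ℝ) (hαn : 0 ≤ αn)
    (hxnB : xn ∈ B)
    (hrn : rn = F xn - yδ)
    (hgn : gn = (L xn).adjoint rn)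
    (hξnext : ξnext = ξn - αn • gn + βn • mn)
    -- `x_n = ∇R*(ξ_n)`, i.e. `ξ_n ∈ ∂R(x_n)`:
    (hxndom : R xn ≠ ⊤)
    (hsubn : ∀ z : X, R xn + ((inner ℝ ξn (z - xn) : ℝ) : EReal) ≤ R z)
    (hxnextdom : R xnext ≠ ⊤) :
    (R xh - R xnext - ((inner ℝ ξnext (xh - xnext) : ℝ) : EReal))
      - (R xh - R xn - ((inner ℝ ξn (xh - xn) : ℝ) : EReal))
    ≤ ((1 / (4 * σ) * αn ^ 2 * ‖gn‖ ^ 2 - αn * ‖rn‖ ^ 2 + (1 + η) * δ * αn * ‖rn‖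
        + η * αn * ‖rn‖ ^ 2 + βn * (inner ℝ mn (xn - xh) : ℝ)
        + 1 / (4 * σ) * βn ^ 2 * ‖mn‖ ^ 2
        - 1 / (2 * σ) * αn * βn * (inner ℝ gn mn : ℝ) : ℝ) : EReal) := by
  obtain ⟨an, han⟩ : ∃ a : ℝ, R xn = a := ⟨_, (EReal.coe_toReal hxndom (hproper_bot xn)).symm⟩
  obtain ⟨anext, hanext⟩ : ∃ a : ℝ, R xnext = a :=
    ⟨_, (EReal.coe_toReal hxnextdom (hproper_bot xnext)).symm⟩
  obtain ⟨ah, hah⟩ : ∃ a : ℝ, R xh = a := ⟨_, (EReal.coe_toReal hxhdom (hproper_bot xh)).symm⟩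
  have hstep := bregman_step_le (ah := ah) (ξ' := ξnext) (xh := xh) hσ
    (strong_subgradient_inequality han hanext (hsc xnext xn hxnextdom hxndom) hsubn)
  have hresidual : (1 - η) * ‖rn‖ ^ 2 - (1 + η) * δ * ‖rn‖ ≤ ⟪gn, xn - xh⟫ := by
    rw [hgn, ContinuousLinearMap.adjoint_inner_left, hrn]
    exact residual_sq_le_inner_tangential hη0 (htc xh hxhB xn hxnB) hxhsol hnoise
  have hΔ : ξnext - ξn = βn • mn - αn • gn := by rw [hξnext]; abel
  have hΔsq : ‖βn • mn - αn • gn‖ ^ 2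
      = βn ^ 2 * ‖mn‖ ^ 2 - 2 * (αn * βn * ⟪gn, mn⟫) + αn ^ 2 * ‖gn‖ ^ 2 := by
    rw [norm_sub_sq_real, norm_smul, norm_smul, real_inner_smul_left, real_inner_smul_right,
      real_inner_comm gn mn, Real.norm_eq_abs, Real.norm_eq_abs, mul_pow, mul_pow, sq_abs, sq_abs]
    ring
  rw [hΔ, hΔsq, inner_sub_left, real_inner_smul_left, real_inner_smul_left] at hstep
  rw [han, hanext, hah]
  norm_cast
  linear_combination hstep + mul_le_mul_of_nonneg_left hresidual hαn

/-- descent inequality for one step of the adaptive heavy ball method: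
`Δ_{n+1} - Δ_n ≤ α_n²‖g_n‖²/(4σ) - α_n‖r_n‖² + (1+η)δα_n‖r_n‖ + ηα_n‖r_n‖²
  + β_n⟨m_n, x_n - x̂⟩ + β_n²‖m_n‖²/(4σ) - α_nβ_n⟨g_n, m_n⟩/(2σ)`. -/
theorem ahb_descent_inequality
    {X Y : Type*} [NormedAddCommGroup X] [InnerProductSpace ℝ X] [CompleteSpace X]
    [NormedAddCommGroup Y] [InnerProductSpace ℝ Y] [CompleteSpace Y]
    (R : X → EReal) (σ : ℝ) (hσ : 0 < σ)
    (hproper_bot : ∀ x, R x ≠ ⊥)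
    (hlsc : LowerSemicontinuous R)
    (hsc : ∀ x' x : X, R x' ≠ ⊤ → R x ≠ ⊤ → ∀ t : ℝ, 0 ≤ t → t ≤ 1 →
      R (t • x' + (1 - t) • x) + ((σ * t * (1 - t) * ‖x' - x‖ ^ 2 : ℝ) : EReal)
        ≤ ((t : ℝ) : EReal) * R x' + (((1 - t : ℝ)) : EReal) * R x)
    (F : X → Y) (L : X → X →L[ℝ] Y) (B : Set X)
    (η : ℝ) (hη0 : 0 ≤ η) (hη1 : η < 1)
    (htc : ∀ u ∈ B, ∀ v ∈ B, ‖F u - F v - L v (u - v)‖ ≤ η * ‖F u - F v‖)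
    (y yδ : Y) (δ : ℝ) (hnoise : ‖yδ - y‖ ≤ δ)
    (xh : X) (hxhB : xh ∈ B) (hxhsol : F xh = y) (hxhdom : R xh ≠ ⊤)
    (xn xnext ξn ξprev ξnext mn gn : X) (rn : Y)
    (αn βn : ℝ) (hαn : 0 ≤ αn) (hβn : 0 ≤ βn)
    (hxnB : xn ∈ B)
    (hrn : rn = F xn - yδ)
    (hgn : gn = (L xn).adjoint rn)
    (hmn : mn = ξn - ξprev)
    (hξnext : ξnext = ξn - αn • gn + βn • mn)
    -- `x_n = ∇R*(ξ_n)`, i.e. `ξ_n ∈ ∂R(x_n)`: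
    (hxndom : R xn ≠ ⊤)
    (hsubn : ∀ z : X, R xn + ((inner ℝ ξn (z - xn) : ℝ) : EReal) ≤ R z)
    -- `x_{n+1} = ∇R*(ξ_{n+1})`, i.e. `ξ_{n+1} ∈ ∂R(x_{n+1})`:
    (hxnextdom : R xnext ≠ ⊤)
    (hsubnext : ∀ z : X, R xnext + ((inner ℝ ξnext (z - xnext) : ℝ) : EReal) ≤ R z) :
    (R xh - R xnext - ((inner ℝ ξnext (xh - xnext) : ℝ) : EReal))
      - (R xh - R xn - ((inner ℝ ξn (xh - xn) : ℝ) : EReal))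
    ≤ ((1 / (4 * σ) * αn ^ 2 * ‖gn‖ ^ 2 - αn * ‖rn‖ ^ 2 + (1 + η) * δ * αn * ‖rn‖
        + η * αn * ‖rn‖ ^ 2 + βn * (inner ℝ mn (xn - xh) : ℝ)
        + 1 / (4 * σ) * βn ^ 2 * ‖mn‖ ^ 2
        - 1 / (2 * σ) * αn * βn * (inner ℝ gn mn : ℝ) : ℝ) : EReal) :=
  ahb_descent_inequality_general R σ hσ hproper_bot hsc F L B η hη0 htc y yδ δ hnoise xh hxhB hxhsol
    hxhdom xn xnext ξn ξnext mn gn rn αn βn hαn hxnB hrn hgn hξnext hxndom hsubn hxnextdom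
end

section
/- (Uniqueness of weak limit) Let x^† be a solution of F(x) = y in a ball B with x^† - x₀ ∈ Ker(L(x^†))^⊥, and let F satisfy the tangential cone condition with η ∈ [0,1) on B. If x̄ ∈ B solves F(x̄) = y and x̄ - x₀ ∈ Ker(L(x^†))^⊥, then x̄ = x^†. -/
theorem sub_mem_ker_of_map_eq_of_norm_le {𝕜 X Y : Type*} [Semiring 𝕜]
    [AddCommGroup X] [TopologicalSpace X] [Module 𝕜 X] [NormedAddCommGroup Y] [Module 𝕜 Y]
    {F : X → Y} {T : X →L[𝕜] Y} {η : ℝ} {u v : X}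
    (hcone : ‖F u - F v - T (u - v)‖ ≤ η * ‖F u - F v‖) (huv : F u = F v) :
    u - v ∈ LinearMap.ker (T : X →ₗ[𝕜] Y) := by
  rw [huv, sub_self, zero_sub, norm_neg, norm_zero, mul_zero] at hcone
  exact norm_le_zero_iff.mp hcone

theorem Submodule.eq_of_sub_mem_of_sub_mem_orthogonal {𝕜 E : Type*} [RCLike 𝕜]
    [NormedAddCommGroup E] [InnerProductSpace 𝕜 E] {K : Submodule 𝕜 E} {a b c : E}
    (hab : a - b ∈ K) (ha : a - c ∈ Kᗮ) (hb : b - c ∈ Kᗮ) : a = b := by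
  have hab' : a - b ∈ Kᗮ := by simpa using Kᗮ.sub_mem ha hb
  exact sub_eq_zero.mp (Submodule.disjoint_def.mp K.orthogonal_disjoint _ hab hab')

theorem unique_solution_in_orthogonal_complement_general
    {X Y : Type*} [NormedAddCommGroup X] [InnerProductSpace ℝ X]
    [NormedAddCommGroup Y] [InnerProductSpace ℝ Y]
    (F : X → Y) (L : X → X →L[ℝ] Y) (B : Set X)
    (η : ℝ)
    (htc : ∀ u ∈ B, ∀ v ∈ B, ‖F u - F v - L v (u - v)‖ ≤ η * ‖F u - F v‖)
    (y : Y) (x0 xd xb : X) (hxd : xd ∈ B) (hxb : xb ∈ B)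
    (hxdsol : F xd = y) (hxbsol : F xb = y)
    (hxd0 : xd - x0 ∈ (LinearMap.ker (L xd : X →ₗ[ℝ] Y))ᗮ)
    (hxb0 : xb - x0 ∈ (LinearMap.ker (L xd : X →ₗ[ℝ] Y))ᗮ) :
    xb = xd :=
  Submodule.eq_of_sub_mem_of_sub_mem_orthogonal
    (sub_mem_ker_of_map_eq_of_norm_le (htc xb hxb xd hxd) (hxbsol.trans hxdsol.symm)) hxb0 hxd0

/-- uniqueness of the weak limit. If both `x†` and `x̄` solve `F(x) = y`
in `B` and both `x† - x₀` and `x̄ - x₀` lie in `Ker(L(x†))^⊥`, then `x̄ = x†`. -/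
theorem unique_solution_in_orthogonal_complement
    {X Y : Type*} [NormedAddCommGroup X] [InnerProductSpace ℝ X]
    [NormedAddCommGroup Y] [InnerProductSpace ℝ Y]
    (F : X → Y) (L : X → X →L[ℝ] Y) (B : Set X)
    (η : ℝ) (hη0 : 0 ≤ η) (hη1 : η < 1)
    (htc : ∀ u ∈ B, ∀ v ∈ B, ‖F u - F v - L v (u - v)‖ ≤ η * ‖F u - F v‖)
    (y : Y) (x0 xd xb : X) (hxd : xd ∈ B) (hxb : xb ∈ B)
    (hxdsol : F xd = y) (hxbsol : F xb = y)
    (hxd0 : xd - x0 ∈ (LinearMap.ker (L xd : X →ₗ[ℝ] Y))ᗮ)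
    (hxb0 : xb - x0 ∈ (LinearMap.ker (L xd : X →ₗ[ℝ] Y))ᗮ) :
    xb = xd :=
  unique_solution_in_orthogonal_complement_general F L B η htc y x0 xd xb hxd hxb hxdsol hxbsol hxd0
    hxb0
end
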